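/- arXiv:2310.01513 — 6 statements merged into one kernel-verified Lean document; each statement's English description precedes it below -/
import Mathlib

section
/- Let X and Y be partial groupoids with anti-involutions ν and ν′ respectively, and let F : X → Y be a map of simplicial sets. Then F ∘ ν = ν′ ∘ F^op as maps X^op → Y; in particular, a simplicial set admits at most one anti-involution making it a partial groupoid. -/
/-- A (skeletal) simplicial set: a contravariant functor on the simplex category,
with `obj n` the set of `n`-simplices and `map α` the action of an
order-preserving map `α : [m] → [n]`. -/
structure SSet' where
  obj : ℕ → Type
  map : ∀ {m n : ℕ}, (Fin (m + 1) →o Fin (n + 1)) → obj n → obj m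
  map_id : ∀ (n : ℕ) (x : obj n), map OrderHom.id x = x
  map_comp : ∀ {k m n : ℕ} (α : Fin (k + 1) →o Fin (m + 1)) (β : Fin (m + 1) →o Fin (n + 1))
      (x : obj n), map (β.comp α) x = map α (map β x)

/-- The order-preserving map `ρ_{ij} : [1] → [n]`, `0 ↦ i`, `1 ↦ j` (for `i ≤ j`). -/
def rho {n : ℕ} (i j : Fin (n + 1)) (h : i ≤ j) : Fin 2 →o Fin (n + 1) where
  toFun := ![i, j]
  monotone' := by
    intro a b hab
    fin_cases a <;> fin_cases b <;> simp_all

/-- The `k`-th edge `ρ_{k,k+1}^*(x)` of an `n`-simplex. -/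
def SSet'.edge (X : SSet') {n : ℕ} (x : X.obj n) (k : Fin n) : X.obj 1 :=
  X.map (rho k.castSucc k.succ (Fin.castSucc_lt_succ (i := k)).le) x

/-- A simplicial set is edgy if each simplex is determined by its string of edges. -/
def SSet'.IsEdgy (X : SSet') : Prop :=
  ∀ n : ℕ, 1 ≤ n → Function.Injective fun (x : X.obj n) (k : Fin n) => X.edge x k

/-- Conjugation of an order-preserving map by the flips `τ`. -/
def conj {m n : ℕ} (α : Fin (m + 1) →o Fin (n + 1)) : Fin (m + 1) →o Fin (n + 1) where
  toFun k := (α k.rev).rev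
  monotone' := by
    intro a b hab
    exact Fin.rev_le_rev.mpr (α.monotone (Fin.rev_le_rev.mpr hab))

/-- An anti-involution on a simplicial set `X`, i.e. a simplicial map
`ν : X^op → X` with `ν^op ∘ ν = id`, described levelwise.  Naturality of
`ν : X^op → X` amounts to `ν (X(τ∘α∘τ) x) = X(α) (ν x)`. -/
structure AntiInvolution (X : SSet') where
  app : ∀ n : ℕ, X.obj n → X.obj n
  naturality : ∀ {m n : ℕ} (α : Fin (m + 1) →o Fin (n + 1)) (x : X.obj n),
    app m (X.map (conj α) x) = X.map α (app n x)
  involutive : ∀ (n : ℕ) (x : X.obj n), app n (app n x) = x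

/-- The constant map `[1] → [n]` at the last vertex, i.e. `s_0 ∘ (d_0)^n`. -/
def lastConst (n : ℕ) : Fin 2 →o Fin (n + 1) := ⟨fun _ => Fin.last n, monotone_const⟩

/-- `LSpec X ν x y` says that `y ∈ X_{2n}` has the edge string
`[f_n† | ⋯ | f_1† | f_1 | ⋯ | f_n]`, where `[f_1 | ⋯ | f_n]` is the edge string of
`x ∈ X_n`, and that the total composite `ρ_{0,2n}^*(y)` is the identity
`s_0(d_0^n x)` on the last vertex of `x`. -/
def LSpec (X : SSet') (ν : AntiInvolution X) {n : ℕ} (x : X.obj n) (y : X.obj (n + n)) : Prop :=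
  (∀ k : Fin (n + n), X.edge y k =
      if h : (k : ℕ) < n then ν.app 1 (X.edge x ⟨n - 1 - (k : ℕ), by omega⟩)
      else X.edge x ⟨(k : ℕ) - n, by have := k.isLt; omega⟩) ∧
  X.map (rho 0 (Fin.last (n + n)) (Fin.zero_le _)) y = X.map (lastConst n) x

/-- A partial groupoid structure on a simplicial set: it is edgy, has an
anti-involution which is the identity on vertices, and has operators
`L : X_n → X_{2n}` with `L[f_1|⋯|f_n] = [f_n†|⋯|f_1†|f_1|⋯|f_n]` whose total
composite is an identity. -/
structure PartialGroupoidStruct (X : SSet') where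
  edgy : X.IsEdgy
  inv : AntiInvolution X
  inv_zero : ∀ x : X.obj 0, inv.app 0 x = x
  L : ∀ {n : ℕ}, X.obj n → X.obj (n + n)
  L_spec : ∀ {n : ℕ}, 1 ≤ n → ∀ x : X.obj n, LSpec X inv x (L x)

/-- The Prop-valued version: `X` together with the anti-involution `ν` is a
partial groupoid. -/
def IsPartialGroupoid (X : SSet') (ν : AntiInvolution X) : Prop :=
  X.IsEdgy ∧ (∀ v : X.obj 0, ν.app 0 v = v) ∧
    ∀ n : ℕ, 1 ≤ n → ∀ x : X.obj n, ∃ y : X.obj (n + n), LSpec X ν x y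

/-- The matrix form of an `n`-simplex: `x_{ij} = ρ_{ij}^*(x)` for `i ≤ j`, and
`x_{ji} = (x_{ij})†`. -/
def matrixForm (X : SSet') (ν : AntiInvolution X) {n : ℕ} (x : X.obj n) (i j : Fin (n + 1)) :
    X.obj 1 :=
  if h : i ≤ j then X.map (rho i j h) x
  else ν.app 1 (X.map (rho j i (le_of_not_ge h)) x)

/-- The fold map `χ_n : [2n] → [n]`, `i ↦ |n - i|`. -/
def chi (n : ℕ) (i : Fin (n + n + 1)) : Fin (n + 1) :=
  ⟨max n (i : ℕ) - min n (i : ℕ), by have := i.isLt; omega⟩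

/-- A map of simplicial sets. -/
structure SSetHom (X Y : SSet') where
  app : ∀ n : ℕ, X.obj n → Y.obj n
  naturality : ∀ {m n : ℕ} (α : Fin (m + 1) →o Fin (n + 1)) (x : X.obj n),
    app m (X.map α x) = Y.map α (app n x)

/-!
Inverses in a partial groupoid are unique: if a 2-simplex `[g|f]` has an identity as long edge,
then `g = f†`. Indeed, in `L[g|f] = [f†|g†|g|f]` the faces `[g†|g]` and `[f†|g†]` are `L g` and
`ν[g|f]`, whose long edges are identities. In an edgy simplicial set a 2-simplex with an identity
edge is degenerate, so the long edge `ρ₀₃` of `L[g|f]` equals both `f†` and `g`.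

A simplicial map `F` sends `L f = [f†|f]` to the 2-simplex `[F(f†)|F f]`, whose long edge is
again an identity, so `F(f†) = (F f)†`; edginess propagates this from edges to all simplices.
-/

def rho3 {n : ℕ} (i j k : Fin (n + 1)) (hij : i ≤ j) (hjk : j ≤ k) : Fin 3 →o Fin (n + 1) where
  toFun := ![i, j, k]
  monotone' := by
    intro a b hab
    fin_cases a <;> fin_cases b <;> simp_all [hij.trans hjk]

namespace SSet'

variable (X : SSet')

def vertex {n : ℕ} (x : X.obj n) (j : Fin (n + 1)) : X.obj 0 :=
  X.map ⟨fun _ => j, monotone_const⟩ x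

/-- The degenerate edge `s₀ v`, the identity at the vertex `v`. -/
def idEdge (v : X.obj 0) : X.obj 1 :=
  X.map ⟨fun _ => 0, monotone_const⟩ v

variable {X}

theorem map_congr {m n : ℕ} {α β : Fin (m + 1) →o Fin (n + 1)} (h : ∀ i, α i = β i)
    (x : X.obj n) : X.map α x = X.map β x := by
  rw [OrderHom.ext α β (funext h)]

theorem map_rho_map {m n : ℕ} (β : Fin (m + 1) →o Fin (n + 1)) (w : X.obj n)
    {a b : Fin (m + 1)} (hab : a ≤ b) {i j : Fin (n + 1)} (hij : i ≤ j)
    (ha : β a = i) (hb : β b = j) :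
    X.map (rho a b hab) (X.map β w) = X.map (rho i j hij) w := by
  rw [← X.map_comp]
  refine map_congr (fun t => ?_) w
  fin_cases t
  exacts [ha, hb]

theorem vertex_map {m n : ℕ} (β : Fin (m + 1) →o Fin (n + 1)) (x : X.obj n) (t : Fin (m + 1)) :
    X.vertex (X.map β x) t = X.vertex x (β t) := by
  rw [vertex, ← X.map_comp]
  rfl

theorem vertex_idEdge (v : X.obj 0) (j : Fin 2) : X.vertex (X.idEdge v) j = v := by
  rw [idEdge, vertex_map, vertex]
  exact (map_congr (fun t => (Fin.fin_one_eq_zero t).symm) v).trans (X.map_id 0 v)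

theorem map_const {n : ℕ} (c : Fin 2 →o Fin (n + 1)) {j : Fin (n + 1)} (hc : ∀ i, c i = j)
    (x : X.obj n) : X.map c x = X.idEdge (X.vertex x j) := by
  rw [idEdge, vertex, ← X.map_comp]
  exact map_congr hc x

theorem edge_one (f : X.obj 1) : X.edge f 0 = f :=
  (map_congr (fun t => by fin_cases t <;> rfl) f).trans (X.map_id 1 f)

theorem IsEdgy.ext (hX : X.IsEdgy) {n : ℕ} (hn : 1 ≤ n) {x y : X.obj n}
    (h : ∀ k, X.edge x k = X.edge y k) : x = y :=
  hX n hn (funext h)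

section Edgy

variable (hX : X.IsEdgy) {n : ℕ} (w : X.obj n) {i j k : Fin (n + 1)} (hij : i ≤ j) (hjk : j ≤ k)
  {v : X.obj 0}
include hX

/-- The triangle `{i, j, k}` of `w` is the degeneracy of its first edge. -/
theorem map_rho_of_right_idEdge (h : X.map (rho j k hjk) w = X.idEdge v) :
    X.map (rho i k (hij.trans hjk)) w = X.map (rho i j hij) w := by
  have hv : X.map (rho j k hjk) w = X.map (rho j j le_rfl) w := by
    rw [h, map_const (rho j j le_rfl) (j := j) (fun t => by fin_cases t <;> rfl),
      ← X.vertex_idEdge v 0, ← h, vertex_map]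
    rfl
  have hface : X.map (rho3 i j k hij hjk) w = X.map (rho3 i j j hij le_rfl) w := by
    refine hX.ext (by norm_num) (Fin.forall_fin_two.2 ⟨?_, ?_⟩)
    · exact (map_rho_map _ w _ hij rfl rfl).trans (map_rho_map _ w _ hij rfl rfl).symm
    · exact (map_rho_map _ w _ hjk rfl rfl).trans
        (hv.trans (map_rho_map (rho3 i j j hij le_rfl) w (a := 1) (b := 2) _ le_rfl rfl rfl).symm)
  have := congrArg (X.map (rho 0 2 (by decide))) hface
  rwa [map_rho_map _ w _ (hij.trans hjk) rfl rfl, map_rho_map _ w _ hij rfl rfl] at this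

theorem map_rho_of_left_idEdge (h : X.map (rho i j hij) w = X.idEdge v) :
    X.map (rho i k (hij.trans hjk)) w = X.map (rho j k hjk) w := by
  have hv : X.map (rho i j hij) w = X.map (rho j j le_rfl) w := by
    rw [h, map_const (rho j j le_rfl) (j := j) (fun t => by fin_cases t <;> rfl),
      ← X.vertex_idEdge v 1, ← h, vertex_map]
    rfl
  have hface : X.map (rho3 i j k hij hjk) w = X.map (rho3 j j k le_rfl hjk) w := by
    refine hX.ext (by norm_num) (Fin.forall_fin_two.2 ⟨?_, ?_⟩)
    · exact (map_rho_map _ w _ hij rfl rfl).trans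
        (hv.trans (map_rho_map (rho3 j j k le_rfl hjk) w (a := 0) (b := 1) _ le_rfl rfl rfl).symm)
    · exact (map_rho_map _ w _ hjk rfl rfl).trans (map_rho_map _ w _ hjk rfl rfl).symm
  have := congrArg (X.map (rho 0 2 (by decide))) hface
  rwa [map_rho_map _ w _ (hij.trans hjk) rfl rfl, map_rho_map _ w _ hjk rfl rfl] at this

end Edgy

end SSet'

namespace SSetHom

variable {X Y : SSet'} (F : SSetHom X Y)

def id (X : SSet') : SSetHom X X := ⟨fun _ x => x, fun _ _ => rfl⟩

theorem edge_app {n : ℕ} (x : X.obj n) (k : Fin n) :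
    Y.edge (F.app n x) k = F.app 1 (X.edge x k) :=
  (F.naturality _ x).symm

theorem app_idEdge (v : X.obj 0) : F.app 1 (X.idEdge v) = Y.idEdge (F.app 0 v) :=
  F.naturality _ v

end SSetHom

namespace AntiInvolution

variable {X : SSet'} (ν : AntiInvolution X)

theorem edge_app {n : ℕ} (x : X.obj n) (k : Fin n) :
    X.edge (ν.app n x) k = ν.app 1 (X.edge x k.rev) := by
  rw [SSet'.edge, ← ν.naturality]
  refine congrArg _ (SSet'.map_congr (fun t => ?_) x)
  fin_cases t
  exacts [Fin.rev_succ k, Fin.rev_castSucc k]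

theorem app_idEdge (v : X.obj 0) : ν.app 1 (X.idEdge v) = X.idEdge (ν.app 0 v) :=
  (congrArg (ν.app 1) (SSet'.map_congr (fun _ => Fin.fin_one_eq_zero _) v)).trans
    (ν.naturality _ v)

end AntiInvolution

namespace PartialGroupoidStruct

variable {X : SSet'} (P : PartialGroupoidStruct X)

theorem inv_idEdge (v : X.obj 0) : P.inv.app 1 (X.idEdge v) = X.idEdge v := by
  rw [P.inv.app_idEdge, P.inv_zero]

theorem edge_L_one (f : X.obj 1) :
    X.edge (P.L f) 0 = P.inv.app 1 f ∧ X.edge (P.L f) 1 = f := by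
  have h := (P.L_spec le_rfl f).1
  exact ⟨by simpa [SSet'.edge_one] using h 0, by simpa [SSet'.edge_one] using h 1⟩

theorem map_rho_L_one (f : X.obj 1) :
    X.map (rho 0 2 (by decide)) (P.L f) = X.idEdge (X.vertex f 1) :=
  (P.L_spec le_rfl f).2.trans (SSet'.map_const _ (fun _ => rfl) f)

theorem edge_L_two (z : X.obj 2) :
    X.edge (P.L z) 0 = P.inv.app 1 (X.edge z 1) ∧ X.edge (P.L z) 1 = P.inv.app 1 (X.edge z 0) ∧
      X.edge (P.L z) 2 = X.edge z 0 ∧ X.edge (P.L z) 3 = X.edge z 1 := by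
  have h := (P.L_spec (by norm_num) z).1
  exact ⟨by simpa using h 0, by simpa using h 1, by simpa using h 2, by simpa using h 3⟩

theorem edge_zero_eq_inv_edge_one (z : X.obj 2) {v : X.obj 0}
    (hz : X.map (rho 0 2 (by decide)) z = X.idEdge v) :
    X.edge z 0 = P.inv.app 1 (X.edge z 1) := by
  obtain ⟨e0, e1, e2, -⟩ := P.edge_L_two z
  have h13 : X.map (rho 1 3 (by decide)) (P.L z) = X.idEdge (X.vertex (X.edge z 0) 1) := by
    have hface : X.map (rho3 1 2 3 (by decide) (by decide)) (P.L z) = P.L (X.edge z 0) := by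
      obtain ⟨g0, g1⟩ := P.edge_L_one (X.edge z 0)
      refine P.edgy.ext (by norm_num) (Fin.forall_fin_two.2 ⟨?_, ?_⟩)
      · exact (SSet'.map_rho_map _ _ _ (i := 1) (j := 2) (by decide) rfl rfl).trans
          (e1.trans g0.symm)
      · exact (SSet'.map_rho_map _ _ _ (i := 2) (j := 3) (by decide) rfl rfl).trans
          (e2.trans g1.symm)
    calc X.map (rho 1 3 _) (P.L z)
        = X.map (rho 0 2 (by decide)) (X.map (rho3 1 2 3 _ _) (P.L z)) :=
          (SSet'.map_rho_map _ _ (a := 0) (b := 2) _ (i := 1) (j := 3) _ rfl rfl).symm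
      _ = _ := by rw [hface, P.map_rho_L_one]
  have h02 : X.map (rho 0 2 (by decide)) (P.L z) = X.idEdge v := by
    have hface : X.map (rho3 0 1 2 (by decide) (by decide)) (P.L z) = P.inv.app 2 z := by
      refine P.edgy.ext (by norm_num) (Fin.forall_fin_two.2 ⟨?_, ?_⟩)
      · exact (SSet'.map_rho_map _ _ _ (i := 0) (j := 1) (by decide) rfl rfl).trans
          (e0.trans (P.inv.edge_app z 0).symm)
      · exact (SSet'.map_rho_map _ _ _ (i := 1) (j := 2) (by decide) rfl rfl).trans
          (e1.trans (P.inv.edge_app z 1).symm)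
    calc X.map (rho 0 2 _) (P.L z)
        = X.map (rho 0 2 (by decide)) (X.map (rho3 0 1 2 _ _) (P.L z)) :=
          (SSet'.map_rho_map _ _ (a := 0) (b := 2) _ (i := 0) (j := 2) _ rfl rfl).symm
      _ = _ := by
        rw [hface, ← P.inv.naturality, SSet'.map_congr (β := rho 0 2 (by decide))
          (fun t => by fin_cases t <;> rfl), hz, P.inv_idEdge]
  calc X.edge z 0 = X.edge (P.L z) 2 := e2.symm
    _ = X.map (rho 0 3 (by decide)) (P.L z) :=
      (SSet'.map_rho_of_left_idEdge P.edgy (P.L z) (j := 2) _ _ h02).symm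
    _ = X.edge (P.L z) 0 := SSet'.map_rho_of_right_idEdge P.edgy (P.L z) (j := 1) _ _ h13
    _ = P.inv.app 1 (X.edge z 1) := e0

end PartialGroupoidStruct

namespace SSetHom

variable {X Y : SSet'} (PX : PartialGroupoidStruct X) (PY : PartialGroupoidStruct Y)
  (F : SSetHom X Y)

theorem app_inv_one (f : X.obj 1) : F.app 1 (PX.inv.app 1 f) = PY.inv.app 1 (F.app 1 f) := by
  obtain ⟨h0, h1⟩ := PX.edge_L_one f
  have hlong :
      Y.map (rho 0 2 (by decide)) (F.app 2 (PX.L f)) = Y.idEdge (F.app 0 (X.vertex f 1)) := by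
    rw [← F.naturality, PX.map_rho_L_one, F.app_idEdge]
  simpa only [F.edge_app, h0, h1] using PY.edge_zero_eq_inv_edge_one _ hlong

theorem app_inv : ∀ (n : ℕ) (x : X.obj n), F.app n (PX.inv.app n x) = PY.inv.app n (F.app n x)
  | 0, x => by rw [PX.inv_zero, PY.inv_zero]
  | n + 1, x => PY.edgy.ext (by omega) fun k => by
    rw [F.edge_app, PX.inv.edge_app, PY.inv.edge_app, F.app_inv_one PX PY, F.edge_app]

end SSetHom

/-- If `X` and `Y` are partial groupoids with anti-involutions
`ν`, `ν′`, and `F : X → Y` is any map of simplicial sets, then `F ∘ ν = ν′ ∘ F^op`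
(levelwise, `F_n ∘ ν_n = ν′_n ∘ F_n`); in particular a simplicial set admits at
most one anti-involution making it a partial groupoid. -/
theorem inv_compat_automatic (X Y : SSet') (PX : PartialGroupoidStruct X)
    (PY : PartialGroupoidStruct Y) (F : SSetHom X Y) :
    (∀ (n : ℕ) (x : X.obj n), F.app n (PX.inv.app n x) = PY.inv.app n (F.app n x)) ∧
    (∀ (P Q : PartialGroupoidStruct X) (n : ℕ) (x : X.obj n),
      P.inv.app n x = Q.inv.app n x) :=
  ⟨F.app_inv PX PY, fun P Q => (SSetHom.id X).app_inv P Q⟩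
end

section
/- Let Z be a symmetric set. If the underlying simplicial set J^*Z is edgy, then J^*Z is a partial groupoid, with anti-involution given in degree n by the action of the flip τ_n and with L given by the action of the fold map χ_n. -/
/-- A symmetric (simplicial) set: a contravariant functor on the category `Υ`
of the sets `[n]` and arbitrary functions. -/
structure SymSet where
  obj : ℕ → Type
  map : ∀ {m n : ℕ}, (Fin (m + 1) → Fin (n + 1)) → obj n → obj m
  map_id : ∀ (n : ℕ) (x : obj n), map id x = x
  map_comp : ∀ {k m n : ℕ} (φ : Fin (k + 1) → Fin (m + 1)) (ψ : Fin (m + 1) → Fin (n + 1))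
      (x : obj n), map (ψ ∘ φ) x = map φ (map ψ x)

/-- Restriction `J^*` of a symmetric set along the inclusion `J : Δ → Υ`. -/
def SymSet.restrict (Z : SymSet) : SSet' where
  obj := Z.obj
  map α x := Z.map (⇑α) x
  map_id n x := Z.map_id n x
  map_comp α β x := Z.map_comp (⇑α) (⇑β) x

/-- A map of symmetric sets. -/
structure SymSetHom (Y Z : SymSet) where
  app : ∀ n : ℕ, Y.obj n → Z.obj n
  naturality : ∀ {m n : ℕ} (φ : Fin (m + 1) → Fin (n + 1)) (x : Y.obj n),
    app m (Y.map φ x) = Z.map φ (app n x)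

/-- The identity map of symmetric sets. -/
def SymSetHom.id (X : SymSet) : SymSetHom X X where
  app _ x := x
  naturality _ _ := rfl

/-- Composition of maps of symmetric sets. -/
def SymSetHom.comp {X Y Z : SymSet} (G : SymSetHom Y Z) (F : SymSetHom X Y) : SymSetHom X Z where
  app n x := G.app n (F.app n x)
  naturality φ x := by rw [F.naturality, G.naturality]

/-- Restriction `J^*` of a map of symmetric sets. -/
def SymSetHom.restrict {Y Z : SymSet} (G : SymSetHom Y Z) : SSetHom Y.restrict Z.restrict where
  app := G.app
  naturality α x := G.naturality (⇑α) x

/-! Everything follows from functoriality of `Z` on arbitrary maps. The flips give an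
anti-involution since `τ ∘ τ = id` and `τ ∘ conj α = α ∘ τ`. The fold map `χ_n` sends the
`k`-th edge of `[2n]` to the `(n-1-k)`-th edge of `[n]` traversed backwards when `k < n`, and to
the `(k-n)`-th edge otherwise, while it collapses `ρ_{0,2n}` to the last vertex `n`; so `χ_n^*`
realises `L`. -/

theorem rho_apply {n : ℕ} (i j : Fin (n + 1)) (h : i ≤ j) (t : Fin 2) : rho i j h t = ![i, j] t :=
  rfl

namespace SymSet

variable (Z : SymSet)

theorem map_map {k m n : ℕ} (φ : Fin (k + 1) → Fin (m + 1)) (ψ : Fin (m + 1) → Fin (n + 1))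
    (x : Z.obj n) : Z.map φ (Z.map ψ x) = Z.map (ψ ∘ φ) x :=
  (Z.map_comp φ ψ x).symm

theorem restrict_edge {n : ℕ} (x : Z.obj n) (k : Fin n) :
    Z.restrict.edge x k = Z.map (rho k.castSucc k.succ (Fin.castSucc_lt_succ (i := k)).le) x :=
  rfl

def flipInvolution : AntiInvolution Z.restrict where
  app n x := Z.map (Fin.rev : Fin (n + 1) → Fin (n + 1)) x
  naturality {_ n} α (x : Z.obj n) := by
    change Z.map _ (Z.map _ x) = Z.map _ (Z.map _ x)
    rw [map_map, map_map]
    congr 1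
    funext t
    exact congrArg Fin.rev (congrArg α (Fin.rev_rev t))
  involutive n (x : Z.obj n) := by
    change Z.map _ (Z.map _ x) = x
    rw [map_map, Fin.rev_involutive.comp_self, Z.map_id]

theorem flipInvolution_app {n : ℕ} (x : Z.obj n) :
    Z.flipInvolution.app n x = Z.map Fin.rev x :=
  rfl

theorem flipInvolution_app_zero (v : Z.obj 0) : Z.flipInvolution.app 0 v = v := by
  rw [flipInvolution_app, Subsingleton.elim (Fin.rev : Fin 1 → Fin 1) id, Z.map_id]

end SymSet

section Fold

variable {n : ℕ}

theorem chi_comp_rho_of_lt (k : Fin (n + n)) (hk : (k : ℕ) < n) :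
    chi n ∘ rho k.castSucc k.succ (Fin.castSucc_lt_succ (i := k)).le =
      rho (Fin.castSucc ⟨n - 1 - k, by omega⟩) (Fin.succ ⟨n - 1 - k, by omega⟩)
        Fin.castSucc_lt_succ.le ∘ Fin.rev := by
  funext t
  fin_cases t <;> ext <;> simp [chi, rho_apply, Fin.rev] <;> omega

theorem chi_comp_rho_of_ge (k : Fin (n + n)) (hk : n ≤ (k : ℕ)) :
    chi n ∘ rho k.castSucc k.succ (Fin.castSucc_lt_succ (i := k)).le =
      rho (Fin.castSucc ⟨k - n, by omega⟩) (Fin.succ ⟨k - n, by omega⟩)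
        Fin.castSucc_lt_succ.le := by
  funext t
  fin_cases t <;> ext <;> simp [chi, rho_apply] <;> omega

theorem chi_comp_rho_zero_last :
    chi n ∘ rho 0 (Fin.last (n + n)) (Fin.zero_le _) = lastConst n := by
  funext t
  fin_cases t <;> ext <;> simp [chi, rho_apply, lastConst]

end Fold

theorem SymSet.lSpec_map_chi (Z : SymSet) {n : ℕ} (x : Z.obj n) :
    LSpec Z.restrict Z.flipInvolution x (Z.map (chi n) x) := by
  refine ⟨fun k => ?_, ?_⟩
  · rw [Z.restrict_edge, Z.map_map]
    split_ifs with hk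
    · rw [chi_comp_rho_of_lt k hk, Z.restrict_edge, Z.flipInvolution_app, Z.map_map]
    · rw [chi_comp_rho_of_ge k (not_lt.mp hk), Z.restrict_edge]
  · change Z.map _ (Z.map _ x) = Z.map _ x
    rw [Z.map_map, chi_comp_rho_zero_last]

/-- If `Z` is a symmetric set whose underlying simplicial set
`J^*Z` is edgy, then `J^*Z` is a partial groupoid, with anti-involution given
in degree `n` by the action of the flip `τ_n = Fin.rev` and with `L` given by
the action of the fold map `χ_n`. -/
theorem restrict_edgy_partialGroupoid (Z : SymSet) (h : Z.restrict.IsEdgy) :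
    ∃ ν : AntiInvolution Z.restrict,
      (∀ (n : ℕ) (x : Z.obj n), ν.app n x = Z.map (Fin.rev : Fin (n + 1) → Fin (n + 1)) x) ∧
      IsPartialGroupoid Z.restrict ν ∧
      (∀ (n : ℕ), 1 ≤ n → ∀ x : Z.obj n, LSpec Z.restrict ν x (Z.map (chi n) x)) :=
  ⟨Z.flipInvolution, fun _ => Z.flipInvolution_app,
    ⟨h, Z.flipInvolution_app_zero, fun _ _ x => ⟨_, Z.lSpec_map_chi x⟩⟩,
    fun _ _ => Z.lSpec_map_chi⟩
end

section
/- Let X be a presheaf on the category of nonempty finite sets. If X is injective along some system of spines (one chosen spine T_n on [n] = {0,...,n} for each n ≥ 1), then X is injective along T for every spine T of every finite set with at least two elements. -/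
/-!
Say that `x y : X(S)` agree on `P ⊆ S` when their restrictions along all maps into `P` coincide,
and suppose they agree on every edge of a connected graph `T` on `S`. By induction on the length,
they agree on the vertex set of every path of `T`: for a path with `k + 1 ≥ 3` vertices, identify
`[k]` with its vertex set so that a non-edge of the (acyclic) chosen spine goes to the two
endpoints; then every spine edge lands on two vertices joined by a strictly shorter subpath, and
injectivity along the spine concludes. Finally, identify `[n]` with `S` arbitrarily: every spine
edge lands on two vertices joined by a path of `T`, so injectivity along the spine gives `x = y`.
-/

/-- A presheaf on the category `Fin₊` of nonempty finite sets and arbitrary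
functions. -/
structure FinPresheaf where
  obj : (S : Type) → [Fintype S] → [Nonempty S] → Type
  map : {S T : Type} → [Fintype S] → [Nonempty S] → [Fintype T] → [Nonempty T] →
      (S → T) → obj T → obj S
  map_id : ∀ (S : Type) [Fintype S] [Nonempty S] (x : obj S), map id x = x
  map_comp : ∀ {S T U : Type} [Fintype S] [Nonempty S] [Fintype T] [Nonempty T]
      [Fintype U] [Nonempty U] (f : S → T) (g : T → U) (x : obj U),
      map (g ∘ f) x = map f (map g x)

/-- `X` is injective along a graph `T` on `S` (for `T` a spine, i.e. a spanning
tree of the complete graph on `S`) if the map `ℰ_T : X(S) → ∏_{e ∈ E(T)} X(e)`,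
whose components are restrictions along the subset inclusions `e ⊆ S`, is
injective. -/
def FinPresheaf.InjAlong (X : FinPresheaf) (S : Type) [Fintype S] [Nonempty S]
    (T : SimpleGraph S) : Prop :=
  Function.Injective fun (x : X.obj S) =>
    fun (e : T.edgeSet) =>
      letI : Fintype {a : S // a ∈ e.1} := Fintype.ofFinite {a : S // a ∈ e.1}
      letI : Nonempty {a : S // a ∈ e.1} := ⟨⟨e.1.out.1, Sym2.out_fst_mem e.1⟩⟩
      X.map (fun v : {a : S // a ∈ e.1} => (v : S)) x

namespace SimpleGraph

variable {V : Type*} {G : SimpleGraph V}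

theorem IsAcyclic.exists_ne_not_adj [Fintype V] (hG : G.IsAcyclic) (hV : 3 ≤ Fintype.card V) :
    ∃ a b, a ≠ b ∧ ¬G.Adj a b := by
  rw [← ne_top_iff_exists_not_adj]
  rintro rfl
  obtain ⟨s, -, hs⟩ := Finset.exists_subset_card_eq (s := Finset.univ) hV
  exact hG.cliqueFree le_rfl s ⟨IsClique.top _, hs⟩

namespace Walk

variable [DecidableEq V] {u v a b : V} {q : G.Walk u v}

theorem IsPath.exists_isPath_support_subset_notMem (hq : q.IsPath) (ha : a ∈ q.support)
    (hb : b ∈ q.support) (hav : a ≠ v) (hbv : b ≠ v) :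
    ∃ r : G.Walk a b, r.IsPath ∧ r.support ⊆ q.support ∧ v ∉ r.support := by
  let w := (q.takeUntil a ha).reverse.append (q.takeUntil b hb)
  have hw : w.support ⊆ (q.takeUntil a ha).support ++ (q.takeUntil b hb).support := by
    intro t ht
    rw [mem_support_append_iff, support_reverse, List.mem_reverse] at ht
    exact List.mem_append.2 ht
  refine ⟨w.bypass, w.bypass_isPath, fun t ht => ?_, fun hv => ?_⟩
  · rcases List.mem_append.1 (hw (w.support_bypass_subset_support ht)) with h | h
    · exact q.support_takeUntil_subset_support ha h
    · exact q.support_takeUntil_subset_support hb h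
  · rcases List.mem_append.1 (hw (w.support_bypass_subset_support hv)) with h | h
    · exact endpoint_notMem_support_takeUntil hq ha hav.symm h
    · exact endpoint_notMem_support_takeUntil hq hb hbv.symm h

theorem IsPath.length_lt_of_support_subset_of_notMem {u' v' : V} {r : G.Walk u' v'} (hr : r.IsPath)
    (hsub : r.support ⊆ q.support) (hv : v ∈ q.support) (hvr : v ∉ r.support) :
    r.length < q.length := by
  have : r.support.length ≤ (q.support.erase v).length :=
    (List.subperm_of_subset hr.support_nodup fun t ht =>
      (List.mem_erase_of_ne fun h : t = v => hvr (h ▸ ht)).2 (hsub ht)).length_le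
  rw [List.length_erase_of_mem hv, length_support, length_support] at this
  omega

theorem IsPath.exists_isPath_support_subset_length_lt (hq : q.IsPath) (ha : a ∈ q.support)
    (hb : b ∈ q.support) (hab : (a ≠ v ∧ b ≠ v) ∨ (a ≠ u ∧ b ≠ u)) :
    ∃ r : G.Walk a b, r.IsPath ∧ r.support ⊆ q.support ∧ r.length < q.length := by
  rcases hab with ⟨hav, hbv⟩ | ⟨hau, hbu⟩
  · obtain ⟨r, hr, hsub, hv⟩ := hq.exists_isPath_support_subset_notMem ha hb hav hbv
    exact ⟨r, hr, hsub, hr.length_lt_of_support_subset_of_notMem hsub q.end_mem_support hv⟩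
  · have hsupp : q.reverse.support ⊆ q.support := by simp
    obtain ⟨r, hr, hsub, hu⟩ := hq.reverse.exists_isPath_support_subset_notMem
      (by simpa using ha) (by simpa using hb) hau hbu
    refine ⟨r, hr, fun t ht => hsupp (hsub ht), ?_⟩
    simpa using hr.length_lt_of_support_subset_of_notMem hsub q.reverse.end_mem_support hu

end Walk

end SimpleGraph

theorem Equiv.exists_apply_eq_and_apply_eq {α β : Type*} [DecidableEq β] (e : α ≃ β)
    {a a' : α} {b b' : β} (ha : a ≠ a') (hb : b ≠ b') : ∃ f : α ≃ β, f a = b ∧ f a' = b' := by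
  let σ := Equiv.swap (e a) b
  have hσa : σ (e a) = b := Equiv.swap_apply_left _ _
  have hσa' : σ (e a') ≠ b := hσa ▸ σ.injective.ne (e.injective.ne ha.symm)
  refine ⟨(e.trans σ).trans (Equiv.swap (σ (e a')) b'), ?_, Equiv.swap_apply_left _ _⟩
  simp only [Equiv.trans_apply, hσa]
  exact Equiv.swap_apply_of_ne_of_ne hσa'.symm hb

namespace FinPresheaf

variable (X : FinPresheaf) {S : Type} [Fintype S] [Nonempty S]

/-- Equality of the restrictions of `x` and `y` to `P`, phrased through all maps landing in `P`
so that no `Fintype` and `Nonempty` instances on the subtype `P` have to be chosen. -/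
def AgreeOn (x y : X.obj S) (P : Set S) : Prop :=
  ∀ (A : Type) [Fintype A] [Nonempty A] (f : A → S), (∀ t, f t ∈ P) → X.map f x = X.map f y

variable {X} {x y : X.obj S}

theorem AgreeOn.mono {P Q : Set S} (h : X.AgreeOn x y Q) (hPQ : P ⊆ Q) : X.AgreeOn x y P :=
  fun A _ _ f hf => h A f fun t => hPQ (hf t)

theorem AgreeOn.eq (h : X.AgreeOn x y Set.univ) : x = y := by
  simpa only [X.map_id] using h S id fun _ => Set.mem_univ _

theorem AgreeOn.map {A : Type} [Fintype A] [Nonempty A] (φ : A → S) {P : Set A}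
    (h : X.AgreeOn x y (φ '' P)) : X.AgreeOn (X.map φ x) (X.map φ y) P := by
  intro B _ _ f hf
  simpa only [X.map_comp] using h B (φ ∘ f) fun t => Set.mem_image_of_mem φ (hf t)

theorem agreeOn_range_of_map_eq {A : Type} [Fintype A] [Nonempty A] (φ : A → S)
    (h : X.map φ x = X.map φ y) : X.AgreeOn x y (Set.range φ) := by
  intro B _ _ f hf
  choose g hg using hf
  have hfg : f = φ ∘ g := funext fun t => (hg t).symm
  rw [hfg, X.map_comp, X.map_comp, h]

theorem injAlong_iff {T : SimpleGraph S} :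
    X.InjAlong S T ↔ ∀ x y : X.obj S, (∀ u v, T.Adj u v → X.AgreeOn x y {u, v}) → x = y := by
  constructor
  · intro hT x y hxy
    apply hT
    funext ⟨e, he⟩
    induction e using Sym2.ind with
    | _ u v =>
      let _ : Fintype {w // w ∈ s(u, v)} := Fintype.ofFinite _
      have : Nonempty {w // w ∈ s(u, v)} := ⟨⟨u, Sym2.mem_mk_left u v⟩⟩
      refine hxy u v he _ Subtype.val fun t => ?_
      simpa only [Set.mem_insert_iff, Set.mem_singleton_iff] using Sym2.mem_iff.1 t.2
  · intro H x y hxy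
    refine H x y fun u v huv => ?_
    let _ : Fintype {w // w ∈ s(u, v)} := Fintype.ofFinite _
    have : Nonempty {w // w ∈ s(u, v)} := ⟨⟨u, Sym2.mem_mk_left u v⟩⟩
    refine (agreeOn_range_of_map_eq Subtype.val (congrFun hxy ⟨s(u, v), huv⟩)).mono ?_
    rintro w (rfl | rfl)
    exacts [⟨⟨w, Sym2.mem_mk_left _ _⟩, rfl⟩, ⟨⟨w, Sym2.mem_mk_right _ _⟩, rfl⟩]

theorem agreeOn_range_of_injAlong {A : Type} [Fintype A] [Nonempty A] {G : SimpleGraph A}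
    (hG : X.InjAlong A G) (φ : A → S) (h : ∀ a b, G.Adj a b → X.AgreeOn x y {φ a, φ b}) :
    X.AgreeOn x y (Set.range φ) :=
  agreeOn_range_of_map_eq φ <| injAlong_iff.1 hG _ _ fun a b hab =>
    AgreeOn.map φ (by simpa only [Set.image_pair] using h a b hab)

theorem agreeOn_support_of_isPath {E : (n : ℕ) → SimpleGraph (Fin (n + 2))}
    (hE : ∀ n, (E n).IsAcyclic) (hX : ∀ n, X.InjAlong (Fin (n + 2)) (E n))
    {T : SimpleGraph S} (hT : ∀ u v, T.Adj u v → X.AgreeOn x y {u, v}) {u v : S}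
    (q : T.Walk u v) (hq : q.IsPath) (huv : u ≠ v) : X.AgreeOn x y {w | w ∈ q.support} := by
  classical
  induction hn : q.length using Nat.strong_induction_on generalizing u v with | _ n ih =>
  match n, q with
  | 0, _ => exact absurd (SimpleGraph.Walk.eq_of_length_eq_zero hn) huv
  | 1, .cons h .nil => simpa [Set.insert_def] using hT u v h
  | m + 2, q =>
    obtain ⟨a₀, b₀, hab₀, hE₀⟩ := (hE (m + 1)).exists_ne_not_adj (by simp)
    have hsupp : q.support.length = m + 1 + 2 := by simp [hn]
    obtain ⟨f, hfa, hfb⟩ := ((finCongr hsupp.symm).trans (hq.support_nodup.getEquiv))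
      |>.exists_apply_eq_and_apply_eq hab₀
        (b := ⟨u, q.start_mem_support⟩) (b' := ⟨v, q.end_mem_support⟩) (by simpa using huv)
    have hrange : Set.range (Subtype.val ∘ f) = {w | w ∈ q.support} := by
      rw [Set.range_comp, f.range_eq_univ, Set.image_univ, Subtype.range_val_subtype]
    rw [← hrange]
    refine agreeOn_range_of_injAlong (hX (m + 1)) _ fun a b hab => ?_
    have hne : (f a ≠ f b₀ ∧ f b ≠ f b₀) ∨ (f a ≠ f a₀ ∧ f b ≠ f a₀) := by
      simp only [ne_eq, f.apply_eq_iff_eq]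
      grind [hab.ne, (E (m + 1)).adj_symm]
    simp only [hfa, hfb, ne_eq, Subtype.ext_iff] at hne
    obtain ⟨r, hr, hsub, hlt⟩ := hq.exists_isPath_support_subset_length_lt (f a).2 (f b).2 hne
    refine (ih _ (hn ▸ hlt) r hr (Subtype.val_injective.ne (f.injective.ne hab.ne)) rfl).mono ?_
    exact Set.pair_subset r.start_mem_support r.end_mem_support

end FinPresheaf

/-- If a presheaf `X` on nonempty finite sets is injective
along some system of spines (one spanning tree `E n` of the complete graph on
`[n+1] = Fin (n + 2)` for each `n`, i.e. on each `[m]` for `m ≥ 1`), then `X` is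
injective along every spine `T` of every finite set `S` with at least two
elements. -/
theorem injAlong_all_of_system (X : FinPresheaf) (E : (n : ℕ) → SimpleGraph (Fin (n + 2)))
    (hE : ∀ n, (E n).IsTree) (hX : ∀ n, X.InjAlong (Fin (n + 2)) (E n)) :
    ∀ (S : Type) [Fintype S] [Nonempty S], 2 ≤ Fintype.card S →
      ∀ T : SimpleGraph S, T.IsTree → X.InjAlong S T := by
  intro S _ _ hcard T hT
  obtain ⟨n, hn⟩ : ∃ n, Fintype.card S = n + 2 := ⟨Fintype.card S - 2, by omega⟩
  let φ : Fin (n + 2) ≃ S := (Fintype.equivFinOfCardEq hn).symm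
  refine X.injAlong_iff.2 fun x y hxy => FinPresheaf.AgreeOn.eq ?_
  rw [← φ.range_eq_univ]
  refine FinPresheaf.agreeOn_range_of_injAlong (hX n) φ fun a b hab => ?_
  obtain ⟨r, hr⟩ := hT.connected.preconnected.exists_isPath (φ a) (φ b)
  exact (FinPresheaf.agreeOn_support_of_isPath (fun n => (hE n).isAcyclic) hX hxy r hr
    (φ.injective.ne hab.ne)).mono (Set.pair_subset r.start_mem_support r.end_mem_support)
end

section
/- A symmetric set X is spiny (i.e., injective along some system of spines) if and only if its underlying simplicial set J^*X is edgy. -/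
/-- Injectivity of a symmetric set along a spine `T` of `[n]`: the map
`X_n → ∏_{e ∈ E(T)} X_1`, whose component at an edge `e` is the action of the
order-preserving injection `[1] → [n]` with image `e`, is injective. -/
def SymSet.InjAlongSpine (X : SymSet) {n : ℕ} (T : SimpleGraph (Fin (n + 1))) : Prop :=
  Function.Injective fun (x : X.obj n) (e : T.edgeSet) =>
    X.map (fun k : Fin 2 => if k = 0 then Sym2.inf e.1 else Sym2.sup e.1) x

/-- A symmetric set is spiny if it is injective along some system of spines,
i.e. some choice of a spanning tree of the complete graph on `[n] = Fin (n + 1)`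
for every `n ≥ 1`. -/
def SymSet.IsSpiny (X : SymSet) : Prop :=
  ∃ E : (n : ℕ) → SimpleGraph (Fin (n + 2)),
    (∀ n, (E n).IsTree) ∧ ∀ n, X.InjAlongSpine (E n)

/-!
Edgy means injective along the path spine with edges `{i, i + 1}`, which gives one direction.
Conversely, only the spine on `[2]` is needed to recover every edge `ρ_{ij}^* x` from the
consecutive ones, by induction on `j - i`: a tree on three vertices misses some pair `{a, b}`,
and pulling `x` back along `a ↦ i`, `b ↦ j`, third vertex `↦ i + 1` shows, by injectivity
along that tree, that `ρ_{ij}^* x` is determined by edges of `x` of smaller length. Injectivity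
along the spine on `[n]` then recovers `x` itself.
-/

open SimpleGraph

theorem SimpleGraph.IsAcyclic.exists_ne_not_adj_s8 {V : Type*} [Fintype V] {G : SimpleGraph V}
    (hG : G.IsAcyclic) (hV : 3 ≤ Fintype.card V) : ∃ a b, a ≠ b ∧ ¬G.Adj a b := by
  classical
  by_contra! h
  exact hG.cliqueFree hV Finset.univ ⟨fun a _ b _ hab => h a b hab, Finset.card_univ⟩

theorem SimpleGraph.adj_inf_sup_of_mem_edgeSet {V : Type*} [LinearOrder V] {G : SimpleGraph V}
    {e : Sym2 V} (he : e ∈ G.edgeSet) : G.Adj e.inf e.sup := by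
  induction e using Sym2.inductionOn with
  | hf u v =>
    rcases le_total u v with h | h
    · simpa [h] using he
    · simpa [h] using he.symm

theorem SimpleGraph.pathGraph_isTree (n : ℕ) : (pathGraph (n + 1)).IsTree := by
  refine isTree_iff_connected_and_card.mpr ⟨pathGraph_connected n, ?_⟩
  suffices Nat.card (Fin n) = Nat.card (pathGraph (n + 1)).edgeSet by simp [← this]
  refine Nat.card_eq_of_bijective
    (fun k => ⟨s(k.castSucc, k.succ), pathGraph_adj.mpr (Or.inl rfl)⟩) ⟨?_, ?_⟩
  · intro a b h
    have hs := congrArg Subtype.val h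
    simp only [Sym2.eq_iff, Fin.ext_iff, Fin.val_castSucc, Fin.val_succ] at hs
    exact Fin.ext (by omega)
  · rintro ⟨e, he⟩
    induction e using Sym2.inductionOn with
    | hf u v =>
      rcases pathGraph_adj.mp ((mem_edgeSet _).mp he) with h | h
      · exact ⟨⟨u, by omega⟩, by ext; simp [Fin.ext_iff, h]⟩
      · exact ⟨⟨v, by omega⟩, by ext; simp [Fin.ext_iff, h, or_comm]⟩

namespace SymSet

variable (X : SymSet)

theorem map_comp_eq_of_map_eq {k m n : ℕ} {f : Fin (m + 1) → Fin (n + 1)} {x y : X.obj n}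
    (h : X.map f x = X.map f y) (g : Fin (k + 1) → Fin (m + 1)) :
    X.map (f ∘ g) x = X.map (f ∘ g) y := by
  rw [X.map_comp, X.map_comp, h]

theorem map_pair_swap_eq {n : ℕ} {p q : Fin (n + 1)} {x y : X.obj n}
    (h : X.map ![p, q] x = X.map ![p, q] y) : X.map ![q, p] x = X.map ![q, p] y := by
  have hswap : ![q, p] = ![p, q] ∘ ![1, 0] := by ext k; fin_cases k <;> rfl
  rw [hswap]
  exact X.map_comp_eq_of_map_eq h _

theorem injAlongSpine_iff {n : ℕ} {T : SimpleGraph (Fin (n + 1))} :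
    X.InjAlongSpine T ↔ ∀ x y : X.obj n,
      (∀ u v, T.Adj u v → u ≤ v → X.map ![u, v] x = X.map ![u, v] y) → x = y := by
  have hpair : ∀ u v : Fin (n + 1), (fun k : Fin 2 => if k = 0 then u else v) = ![u, v] := by
    intro u v; ext k; fin_cases k <;> rfl
  constructor
  · refine fun hX x y h => hX (funext fun e => ?_)
    simp only [hpair]
    exact h _ _ (adj_inf_sup_of_mem_edgeSet e.2) (Sym2.inf_le_sup _)
  · intro h x y hxy
    refine h x y fun u v huv hle => ?_
    simpa [hpair, hle] using congrFun hxy ⟨s(u, v), huv⟩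

theorem map_eq_of_injAlongSpine {m n : ℕ} {T : SimpleGraph (Fin (m + 1))}
    (hX : X.InjAlongSpine T) {φ : Fin (m + 1) → Fin (n + 1)} {x y : X.obj n}
    (h : ∀ u v, T.Adj u v → X.map ![φ u, φ v] x = X.map ![φ u, φ v] y) :
    X.map φ x = X.map φ y := by
  refine (X.injAlongSpine_iff.mp hX) _ _ fun u v huv _ => ?_
  have hcomp : φ ∘ ![u, v] = ![φ u, φ v] := by ext k; fin_cases k <;> rfl
  rw [← X.map_comp, ← X.map_comp, hcomp]
  exact h u v huv

theorem map_pair_self_eq_of_map_edge_eq {N : ℕ} {x y : X.obj (N + 1)}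
    (h : ∀ k : Fin (N + 1), X.map ![k.castSucc, k.succ] x = X.map ![k.castSucc, k.succ] y)
    (p : Fin (N + 2)) : X.map ![p, p] x = X.map ![p, p] y := by
  induction p using Fin.lastCases with
  | last =>
    have hdeg : ![Fin.last (N + 1), Fin.last (N + 1)] =
        ![(Fin.last N).castSucc, (Fin.last N).succ] ∘ ![1, 1] := by
      ext k; fin_cases k <;> rfl
    rw [hdeg]
    exact X.map_comp_eq_of_map_eq (h _) _
  | cast k =>
    have hdeg : ![k.castSucc, k.castSucc] = ![k.castSucc, k.succ] ∘ ![0, 0] := by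
      ext l; fin_cases l <;> rfl
    rw [hdeg]
    exact X.map_comp_eq_of_map_eq (h k) _

theorem map_pair_eq_of_map_pair_eq_of_dist_lt {T : SimpleGraph (Fin 3)} (hT : T.IsTree)
    (hX : X.InjAlongSpine T) {n : ℕ} {x y : X.obj n} {i j : Fin (n + 1)} (hij : (i : ℕ) + 2 ≤ j)
    (ih : ∀ p q : Fin (n + 1), Nat.dist p q < Nat.dist i j →
      X.map ![p, q] x = X.map ![p, q] y) :
    X.map ![i, j] x = X.map ![i, j] y := by
  obtain ⟨a, b, hab, hnadj⟩ := hT.isAcyclic.exists_ne_not_adj_s8 (by simp)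
  let m : Fin (n + 1) := ⟨i + 1, by omega⟩
  let φ : Fin 3 → Fin (n + 1) := fun w => if w = a then i else if w = b then j else m
  have hφ : φ ∘ ![a, b] = ![i, j] := by ext k; fin_cases k <;> simp [φ, hab.symm]
  have hval : ∀ w, (φ w = i ∧ w = a) ∨ (φ w = j ∧ w = b) ∨ φ w = m := by
    intro w; simp only [φ]; split_ifs <;> simp_all
  rw [← hφ]
  refine X.map_comp_eq_of_map_eq (X.map_eq_of_injAlongSpine hX fun u v huv => ih _ _ ?_) _
  have hne : ¬((u = a ∧ v = b) ∨ (u = b ∧ v = a)) := by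
    rintro (⟨rfl, rfl⟩ | ⟨rfl, rfl⟩)
    exacts [hnadj huv, hnadj huv.symm]
  simp only [Nat.dist, Fin.ext_iff, m] at hval hne ⊢
  rcases hval u with hu | hu | hu <;> rcases hval v with hv | hv | hv <;> omega

theorem map_pair_eq_of_map_edge_eq {T : SimpleGraph (Fin 3)} (hT : T.IsTree)
    (hX : X.InjAlongSpine T) {N : ℕ} {x y : X.obj (N + 1)}
    (h : ∀ k : Fin (N + 1), X.map ![k.castSucc, k.succ] x = X.map ![k.castSucc, k.succ] y)
    (p q : Fin (N + 2)) : X.map ![p, q] x = X.map ![p, q] y := by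
  induction hd : Nat.dist p q using Nat.strong_induction_on generalizing p q with
  | _ d ih =>
  wlog hpq : p ≤ q generalizing p q
  · exact X.map_pair_swap_eq (this q p (Nat.dist_comm p q ▸ hd) (le_of_not_ge hpq))
  obtain rfl | hpq | hpq : p = q ∨ (p : ℕ) + 1 = q ∨ (p : ℕ) + 2 ≤ q := by
    rw [Fin.le_def] at hpq; rw [Fin.ext_iff]; omega
  · exact X.map_pair_self_eq_of_map_edge_eq h p
  · obtain ⟨k, rfl⟩ : ∃ k : Fin (N + 1), p = k.castSucc := ⟨⟨p, by omega⟩, rfl⟩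
    obtain rfl : q = k.succ := Fin.ext (by rw [Fin.val_succ, ← hpq]; rfl)
    exact h k
  · exact X.map_pair_eq_of_map_pair_eq_of_dist_lt hT hX hpq fun p' q' hlt =>
      ih _ (hd ▸ hlt) p' q' rfl

end SymSet

/-- A symmetric set `X` is spiny (injective along some system
of spines) if and only if its underlying simplicial set `J^*X` is edgy. -/
theorem spiny_iff_edgy (X : SymSet) : X.IsSpiny ↔ X.restrict.IsEdgy := by
  constructor
  · rintro ⟨E, hE, hX⟩ n hn x y hxy
    obtain ⟨N, rfl⟩ : ∃ N, n = N + 1 := ⟨n - 1, by omega⟩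
    refine (X.injAlongSpine_iff.mp (hX N)) x y fun u v _ _ => ?_
    exact X.map_pair_eq_of_map_edge_eq (hE 1) (hX 1) (congrFun hxy) u v
  · refine fun hedgy =>
      ⟨fun n => pathGraph (n + 2), fun n => pathGraph_isTree (n + 1), fun n => ?_⟩
    refine X.injAlongSpine_iff.mpr fun x y h => hedgy (n + 1) n.succ_pos (funext fun k => ?_)
    exact h _ _ (pathGraph_adj.mpr (Or.inl rfl)) (Fin.castSucc_le_succ k)
end

section
/- Fix n ≥ 1 and w ≥ 1, and let χ_n^w denote the composite χ_n ∘ χ_{2n} ∘ χ_{4n} ∘ ⋯ ∘ χ_{2^{w−1} n} : [2^w n] → [n]. Then for every t with 0 ≤ t ≤ 2^{w−1} − 1 and every i with 2tn ≤ i ≤ 2(t+1)n one has χ_n^w(i) = |(2t+1)n − i|, i.e. χ_n^w(i) = (2t+1)n − i if 2tn ≤ i ≤ (2t+1)n and χ_n^w(i) = i − (2t+1)n if (2t+1)n ≤ i ≤ 2(t+1)n. -/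
/-- The fold map `χ_n : [2n] → [n]`, `i ↦ |n − i|`, as a function on `ℕ`. -/
def chiN (n : ℕ) (i : ℕ) : ℕ := max n i - min n i

/-- The iterated fold `χ_n^w = χ_n ∘ χ_{2n} ∘ χ_{4n} ∘ ⋯ ∘ χ_{2^{w−1} n} : [2^w n] → [n]`
(with `χ_n^0 = id`). -/
def chiPow (n : ℕ) : ℕ → (ℕ → ℕ)
  | 0 => id
  | w + 1 => chiPow n w ∘ chiN (2 ^ w * n)

lemma iterated_fold_aux (n : ℕ) : ∀ w, 1 ≤ w → ∀ t i, t ≤ 2 ^ (w - 1) - 1 →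
    2 * t * n ≤ i → i ≤ 2 * (t + 1) * n →
    chiPow n w i = max ((2 * t + 1) * n) i - min ((2 * t + 1) * n) i := by
  intro w
  induction w with
  | zero => omega
  | succ k ih =>
    intro _ t i ht h1 h2
    rcases Nat.eq_zero_or_pos k with hk | hk
    · subst hk
      simp only [Nat.add_sub_cancel, pow_zero] at ht
      have ht0 : t = 0 := by omega
      subst ht0
      simp only [chiPow, chiN, Function.comp_apply, pow_zero, one_mul, id]
      norm_num
    · -- k ≥ 1
      set P := 2 ^ (k - 1) with hP
      have h2k : (2:ℕ) ^ k = 2 * P := by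
        rw [hP, ← pow_succ']
        congr 1
        omega
      have hP1 : 1 ≤ P := Nat.one_le_two_pow
      simp only [Nat.add_sub_cancel] at ht
      have ht' : t ≤ 2 * P - 1 := by rw [← h2k]; omega
      simp only [chiPow, Function.comp_apply]
      rw [h2k]
      by_cases hcase : t + 1 ≤ P
      · -- left half: i ≤ 2^k n
        set t' := P - 1 - t with ht'def
        have e1 : 2 * t' + 2 * (t + 1) = 2 * P := by omega
        have e2 : 2 * (t' + 1) + 2 * t = 2 * P := by omega
        have e3 : (2 * t' + 1) + (2 * t + 1) = 2 * P := by omega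
        have hA : 2 * t' * n + 2 * (t + 1) * n = 2 * P * n := by rw [← add_mul, e1]
        have hB : 2 * (t' + 1) * n + 2 * t * n = 2 * P * n := by rw [← add_mul, e2]
        have hC : (2 * t' + 1) * n + (2 * t + 1) * n = 2 * P * n := by
          rw [← add_mul, e3]
        have hile : i ≤ 2 * P * n := by omega
        have hj : chiN (2 * P * n) i = 2 * P * n - i := by
          simp only [chiN]
          omega
        rw [hj]
        have ihap := ih hk t' (2 * P * n - i) (by omega) (by omega) (by omega)
        rw [ihap]
        omega
      · -- right half: i ≥ 2^k n
        set t' := t - P with ht'def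
        have e1 : 2 * t' + 2 * P = 2 * t := by omega
        have e2 : 2 * (t' + 1) + 2 * P = 2 * (t + 1) := by omega
        have e3 : (2 * t' + 1) + 2 * P = 2 * t + 1 := by omega
        have hA : 2 * t' * n + 2 * P * n = 2 * t * n := by rw [← add_mul, e1]
        have hB : 2 * (t' + 1) * n + 2 * P * n = 2 * (t + 1) * n := by
          rw [← add_mul, e2]
        have hC : (2 * t' + 1) * n + 2 * P * n = (2 * t + 1) * n := by
          rw [← add_mul, e3]
        have hige : 2 * P * n ≤ i := by omega
        have hj : chiN (2 * P * n) i = i - 2 * P * n := by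
          simp only [chiN]
          omega
        rw [hj]
        have ihap := ih hk t' (i - 2 * P * n) (by omega) (by omega) (by omega)
        rw [ihap]
        omega

/-- For `n ≥ 1`, `w ≥ 1`, `0 ≤ t ≤ 2^{w−1} − 1` and
`2tn ≤ i ≤ 2(t+1)n`, the iterated fold satisfies `χ_n^w(i) = |(2t+1)n − i|`,
i.e. `χ_n^w(i) = (2t+1)n − i` for `2tn ≤ i ≤ (2t+1)n` and
`χ_n^w(i) = i − (2t+1)n` for `(2t+1)n ≤ i ≤ 2(t+1)n`. -/
theorem iterated_fold (n w : ℕ) (hn : 1 ≤ n) (hw : 1 ≤ w) (t : ℕ)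
    (ht : t ≤ 2 ^ (w - 1) - 1) (i : ℕ) (hi1 : 2 * t * n ≤ i)
    (hi2 : i ≤ 2 * (t + 1) * n) :
    chiPow n w i = max ((2 * t + 1) * n) i - min ((2 * t + 1) * n) i ∧
    (i ≤ (2 * t + 1) * n → chiPow n w i = (2 * t + 1) * n - i) ∧
    ((2 * t + 1) * n ≤ i → chiPow n w i = i - (2 * t + 1) * n) := by
  have h := iterated_fold_aux n w hw t i ht hi1 hi2
  refine ⟨h, fun h1 => ?_, fun h2 => ?_⟩ <;> rw [h] <;> omega
end

section
/- Let φ : [m] → [n] be an arbitrary function between the sets [m] = {0,...,m} and [n] = {0,...,n} with n ≥ 1. Then there exist w ≥ 1 and an order-preserving map α : [m] → [2^w n] such that φ = χ_n^w ∘ α, where χ_n^w = χ_n ∘ χ_{2n} ∘ ⋯ ∘ χ_{2^{w−1} n}. Consequently, the category Υ of the sets [n] and arbitrary functions is generated by the order-preserving maps together with the fold maps χ_n. -/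
/-!
On `[2^w n]` the iterated fold is the triangle wave `x ↦ χ_n (x mod 2n)`: when `2n ∣ N`, folding
`x ↦ |N − x|` preserves `x mod 2n` up to sign, and `χ_n` is symmetric on `[2n]`. So `φ` is
realised by sending `k` into the `k`-th period of the wave, at the point `2nk + (n − φ k)` where
the wave takes the value `φ k`; these points increase with `k`.
-/

lemma chiN_of_le {N x : ℕ} (h : x ≤ N) : chiN N x = N - x := by
  unfold chiN; omega

lemma chiN_of_ge {N x : ℕ} (h : N ≤ x) : chiN N x = x - N := by
  unfold chiN; omega

lemma chiN_le {N x : ℕ} (h : x ≤ 2 * N) : chiN N x ≤ N := by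
  unfold chiN; omega

lemma chiN_eq_of_dvd_add {n a b : ℕ} (ha : a < 2 * n) (hb : b < 2 * n) (h : 2 * n ∣ a + b) :
    chiN n a = chiN n b := by
  obtain ⟨c, hc⟩ := h
  have hc2 : c < 2 := by nlinarith
  interval_cases c <;> unfold chiN <;> omega

lemma chiN_chiN_mod_of_dvd {n N : ℕ} (hn : 0 < n) (hN : 2 * n ∣ N) (x : ℕ) :
    chiN n (chiN N x % (2 * n)) = chiN n (x % (2 * n)) := by
  have hpos : 0 < 2 * n := by omega
  rcases le_total x N with h | h
  · rw [chiN_of_le h]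
    refine chiN_eq_of_dvd_add (Nat.mod_lt _ hpos) (Nat.mod_lt _ hpos) ?_
    rw [Nat.dvd_iff_mod_eq_zero, ← Nat.add_mod, Nat.sub_add_cancel h]
    exact Nat.mod_eq_zero_of_dvd hN
  · obtain ⟨c, rfl⟩ := hN
    rw [chiN_of_ge h]
    conv_rhs => rw [← Nat.sub_add_cancel h, Nat.add_mul_mod_self_left]

lemma chiPow_eq_chiN_mod {n : ℕ} (hn : 0 < n) {w : ℕ} (hw : 1 ≤ w) :
    ∀ {x : ℕ}, x ≤ 2 ^ w * n → chiPow n w x = chiN n (x % (2 * n)) := by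
  induction w, hw using Nat.le_induction with
  | base =>
    intro x hx
    simp only [chiPow, Function.comp_apply, id, pow_zero, one_mul]
    rcases (show x ≤ 2 * n by simpa using hx).lt_or_eq with hlt | rfl
    · rw [Nat.mod_eq_of_lt hlt]
    · rw [Nat.mod_self, chiN_of_ge (by omega), chiN_of_le (Nat.zero_le n)]
      omega
  | succ w hw ih =>
    intro x hx
    have hdvd : 2 * n ∣ 2 ^ w * n := mul_dvd_mul_right (dvd_pow_self 2 (by omega)) n
    simp only [chiPow, Function.comp_apply]
    rw [ih (chiN_le (by rwa [pow_succ, mul_comm _ 2, mul_assoc] at hx)),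
      chiN_chiN_mod_of_dvd hn hdvd]

lemma two_mul_mul_add_sub_le_two_pow_mul {n m k : ℕ} (j : ℕ) (hk : k ≤ m) :
    2 * n * k + (n - j) ≤ 2 ^ (m + 1) * n := by
  have hm : 2 * m + 2 ≤ 2 ^ (m + 1) := by
    rw [pow_succ]; linarith [Nat.lt_two_pow_self (n := m)]
  calc 2 * n * k + (n - j) ≤ n * (2 * m + 2) := by nlinarith [Nat.sub_le n j]
    _ ≤ 2 ^ (m + 1) * n := by rw [mul_comm]; exact Nat.mul_le_mul_right n hm

lemma two_mul_mul_add_sub_le_of_lt {n k l : ℕ} (i j : ℕ) (h : k < l) :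
    2 * n * k + (n - i) ≤ 2 * n * l + (n - j) := by
  have : 2 * n * (k + 1) ≤ 2 * n * l := Nat.mul_le_mul_left _ h
  rw [mul_add, mul_one] at this
  omega

/-- Every function `φ : [m] → [n]` (with `n ≥ 1`) factors as
an order-preserving map `α : [m] → [2^w n]` followed by the iterated fold
`χ_n^w : [2^w n] → [n]` for some `w ≥ 1`.  Consequently the category `Υ` is
generated by the order-preserving maps together with the fold maps `χ_n`. -/
theorem factor_through_folds (m n : ℕ) (hn : 1 ≤ n) (φ : Fin (m + 1) → Fin (n + 1)) :
    ∃ w : ℕ, 1 ≤ w ∧ ∃ α : Fin (m + 1) → Fin (2 ^ w * n + 1),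
      Monotone α ∧ ∀ k : Fin (m + 1), (φ k : ℕ) = chiPow n w (α k : ℕ) := by
  have hφ (k : Fin (m + 1)) : (φ k : ℕ) ≤ n := Nat.lt_succ_iff.mp (φ k).isLt
  have hα (k : Fin (m + 1)) : 2 * n * k + (n - φ k) ≤ 2 ^ (m + 1) * n :=
    two_mul_mul_add_sub_le_two_pow_mul _ (Nat.lt_succ_iff.mp k.isLt)
  refine ⟨m + 1, by omega, fun k => ⟨_, Nat.lt_succ_of_le (hα k)⟩, ?_, fun k => ?_⟩
  · intro k l hkl
    rcases (Fin.le_iff_val_le_val.mp hkl).lt_or_eq with hlt | heq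
    · exact Fin.mk_le_mk.mpr (two_mul_mul_add_sub_le_of_lt _ _ hlt)
    · simp [Fin.ext heq]
  · rw [chiPow_eq_chiN_mod hn le_add_self (hα k), Nat.mul_add_mod, Nat.mod_eq_of_lt (by omega),
      chiN_of_le (Nat.sub_le n _)]
    omega
end
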